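/- For real Y ≥ 1, Σ_{m≤Y} (1/m)(Y−m)² = Y² log Y + C₂Y² + Y + O(1), where C₂ = −11/12 − 2∫₁^∞ B₂(u)/u³ du and B₂(u) = (1/2)(u−⌊u⌋)² − (1/2)(u−⌊u⌋) + 1/12. -/

import Mathlib

open Finset

/-- The periodic second Bernoulli polynomial. -/
noncomputable def B₂ (u : ℝ) : ℝ :=
  (1 / 2) * (u - ⌊u⌋) ^ 2 - (1 / 2) * (u - ⌊u⌋) + 1 / 12

/-- The constant `C₂ = -11/12 - 2∫₁^∞ B₂(u)/u³ du`. -/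
noncomputable def C₂ : ℝ := -11 / 12 - 2 * ∫ u in Set.Ioi (1 : ℝ), B₂ u / u ^ 3

open MeasureTheory

/-!
Expanding the square, the sum equals `Y² H_N - 2YN + N(N+1)/2` with `N = ⌊Y⌋` and `H_N` the
harmonic number. On each `[k, k+1]` the function `B₂` is a polynomial, so `B₂(u)/u³` has an
explicit antiderivative there; summing these gives the second-order Euler–Maclaurin formula
`H_N = log N + C₂ + 3/2 + 1/(2N) - 1/(12N²) + 2∫_N^∞ B₂(u)/u³ du`. Writing `Y = N + θ`, what is
left is `Y² log(Y/N) - Nθ - 3θ²/2`, kept bounded by `θ/Y ≤ log(Y/N) ≤ θ/N`, plus terms of size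
`θ²/N` and `Y²/N²`.
-/

lemma measurable_B₂ : Measurable B₂ := by
  unfold B₂; fun_prop

lemma abs_B₂_le (u : ℝ) : |B₂ u| ≤ 1 / 12 := by
  have h₀ := Int.fract_nonneg u
  have h₁ := Int.fract_lt_one u
  rw [B₂, Int.self_sub_floor, abs_le]
  constructor <;> nlinarith

lemma norm_B₂_div_pow_three_le {u : ℝ} (hu : 0 < u) :
    ‖B₂ u / u ^ 3‖ ≤ 12⁻¹ * u ^ (-3 : ℝ) := by
  rw [Real.rpow_neg hu.le, Real.rpow_ofNat, norm_div, Real.norm_eq_abs, norm_pow,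
    Real.norm_of_nonneg hu.le, div_eq_mul_inv]
  exact mul_le_mul_of_nonneg_right (by linarith [abs_B₂_le u]) (by positivity)

lemma integrableOn_Ioi_B₂_div_pow_three {a : ℝ} (ha : 0 < a) :
    IntegrableOn (fun u ↦ B₂ u / u ^ 3) (Set.Ioi a) :=
  ((integrableOn_Ioi_rpow_of_lt (by norm_num) ha).const_mul 12⁻¹).mono'
    ((measurable_B₂.div (measurable_id.pow_const 3)).aestronglyMeasurable.restrict)
    ((ae_restrict_mem measurableSet_Ioi).mono fun _ hu ↦ norm_B₂_div_pow_three_le (ha.trans hu))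

lemma abs_integral_Ioi_B₂_div_pow_three_le {a : ℝ} (ha : 0 < a) :
    |∫ u in Set.Ioi a, B₂ u / u ^ 3| ≤ 1 / (24 * a ^ 2) := by
  have hbound : ∀ᵐ u ∂volume.restrict (Set.Ioi a), ‖B₂ u / u ^ 3‖ ≤ 12⁻¹ * u ^ (-3 : ℝ) :=
    (ae_restrict_mem measurableSet_Ioi).mono fun _ hu ↦ norm_B₂_div_pow_three_le (ha.trans hu)
  calc |∫ u in Set.Ioi a, B₂ u / u ^ 3|
      ≤ ∫ u in Set.Ioi a, 12⁻¹ * u ^ (-3 : ℝ) :=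
        norm_integral_le_of_norm_le
          ((integrableOn_Ioi_rpow_of_lt (by norm_num) ha).const_mul 12⁻¹) hbound
    _ = 1 / (24 * a ^ 2) := by
        rw [integral_const_mul, integral_Ioi_rpow_of_lt (by norm_num) ha]
        norm_num [Real.rpow_neg ha.le]
        ring

lemma B₂_eq_of_mem_Ico {k : ℤ} {u : ℝ} (hu : u ∈ Set.Ico (k : ℝ) (k + 1)) :
    B₂ u = (1 / 2) * (u - k) ^ 2 - (1 / 2) * (u - k) + 1 / 12 := by
  rw [B₂, Int.floor_eq_iff.mpr hu]

lemma integral_B₂_div_pow_three_of_nat {k : ℕ} (hk : 0 < k) :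
    ∫ u in (k : ℝ)..k + 1, B₂ u / u ^ 3 =
      (Real.log (k + 1) - Real.log k) / 2 + (k + 1 / 2) * (1 / (k + 1) - 1 / k)
        - (k ^ 2 + k + 1 / 6) / 4 * (1 / (k + 1) ^ 2 - 1 / k ^ 2) := by
  set F : ℝ → ℝ :=
    fun u ↦ Real.log u / 2 + (k + 1 / 2) * u⁻¹ - (k ^ 2 + k + 1 / 6) / 4 * (u ^ 2)⁻¹
  have hkpos : (0 : ℝ) < k := by exact_mod_cast hk
  have hF : ∀ u : ℝ, 0 < u →
      HasDerivAt F (((1 / 2) * (u - k) ^ 2 - (1 / 2) * (u - k) + 1 / 12) / u ^ 3) u := by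
    intro u hu
    refine HasDerivAt.congr_deriv ((((Real.hasDerivAt_log hu.ne').div_const 2).add
      ((hasDerivAt_inv hu.ne').const_mul (k + 1 / 2 : ℝ))).sub
      (((hasDerivAt_pow 2 u).inv (by positivity)).const_mul ((k ^ 2 + k + 1 / 6) / 4 : ℝ))) ?_
    field_simp
    ring
  rw [intervalIntegral.integral_eq_sub_of_hasDerivAt_of_le (f := F) (by linarith)
    (fun u hu ↦ (hF u (hkpos.trans_le hu.1)).continuousAt.continuousWithinAt)
    (fun u hu ↦ by
      rw [B₂_eq_of_mem_Ico (k := k) (by push_cast; exact ⟨hu.1.le, hu.2⟩)]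
      exact hF u (hkpos.trans hu.1))
    ((intervalIntegrable_iff_integrableOn_Ioc_of_le (by linarith)).mpr
      ((integrableOn_Ioi_B₂_div_pow_three hkpos).mono_set Set.Ioc_subset_Ioi_self))]
  simp only [F]
  ring

lemma sum_Icc_one_div_eq (N : ℕ) (hN : 1 ≤ N) :
    ∑ m ∈ Icc 1 N, 1 / (m : ℝ) = Real.log N + C₂ + 3 / 2 + 1 / (2 * N) - 1 / (12 * N ^ 2)
      + 2 * ∫ u in Set.Ioi (N : ℝ), B₂ u / u ^ 3 := by
  induction N, hN using Nat.le_induction with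
  | base => norm_num [C₂]; ring
  | succ n hn ih =>
    have hn₀ : (0 : ℝ) < n := by exact_mod_cast hn
    rw [← intervalIntegral.integral_interval_add_Ioi (integrableOn_Ioi_B₂_div_pow_three hn₀)
      (integrableOn_Ioi_B₂_div_pow_three (a := n + 1) (by linarith)),
      integral_B₂_div_pow_three_of_nat hn] at ih
    rw [sum_Icc_succ_top (by omega), ih]
    push_cast
    field_simp
    ring

lemma sum_Icc_one_div_mul_sub_sq (Y : ℝ) (N : ℕ) :
    ∑ m ∈ Icc 1 N, 1 / (m : ℝ) * (Y - m) ^ 2 =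
      Y ^ 2 * ∑ m ∈ Icc 1 N, 1 / (m : ℝ) - 2 * Y * N + N * (N + 1) / 2 := by
  induction N with
  | zero => simp
  | succ n ih =>
    rw [sum_Icc_succ_top (by omega), sum_Icc_succ_top (by omega), ih]
    push_cast
    field_simp
    ring

lemma abs_sq_mul_log_sub_log_sub_le {x y : ℝ} (hx : 1 ≤ x) (hxy : x ≤ y) (hyx : y ≤ x + 1) :
    |y ^ 2 * (Real.log y - Real.log x) - x * (y - x) - 3 / 2 * (y - x) ^ 2| ≤ 3 / 2 := by
  have hx₀ : 0 < x := by linarith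
  have hy₀ : 0 < y := by linarith
  have hlog_eq : Real.log y - Real.log x = Real.log (y / x) := (Real.log_div hy₀.ne' hx₀.ne').symm
  have hlower : y * (y - x) ≤ y ^ 2 * (Real.log y - Real.log x) := by
    have := Real.one_sub_inv_le_log_of_pos (div_pos hy₀ hx₀)
    rw [← hlog_eq, inv_div] at this
    have h : y * (y - x) = y ^ 2 * (1 - x / y) := by field_simp
    rw [h]; gcongr
  have hupper : y ^ 2 * (Real.log y - Real.log x) ≤ (y - x) * y ^ 2 / x := by
    have := Real.log_le_sub_one_of_pos (div_pos hy₀ hx₀)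
    rw [← hlog_eq] at this
    have h : (y - x) * y ^ 2 / x = y ^ 2 * (y / x - 1) := by field_simp
    rw [h]; gcongr
  have hcube : (y - x) ^ 3 / x ≤ 1 := by
    rw [div_le_one hx₀]; nlinarith [pow_le_one₀ (n := 3) (by linarith : 0 ≤ y - x) (by linarith)]
  have hexpand : (y - x) * y ^ 2 / x = x * (y - x) + 2 * (y - x) ^ 2 + (y - x) ^ 3 / x := by
    field_simp; ring
  rw [abs_le]
  constructor <;> nlinarith

lemma sum_Icc_one_div_mul_sub_sq_sub_eq (Y : ℝ) {N : ℕ} (hN : 1 ≤ N) :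
    (∑ m ∈ Icc 1 N, 1 / (m : ℝ) * (Y - m) ^ 2) - (Y ^ 2 * Real.log Y + C₂ * Y ^ 2 + Y) =
      -(Y ^ 2 * (Real.log Y - Real.log N) - N * (Y - N) - 3 / 2 * (Y - N) ^ 2)
        + (Y - N) ^ 2 / (2 * N) - Y ^ 2 / (12 * N ^ 2)
        + 2 * Y ^ 2 * ∫ u in Set.Ioi (N : ℝ), B₂ u / u ^ 3 := by
  rw [sum_Icc_one_div_mul_sub_sq, sum_Icc_one_div_eq N hN]
  field_simp
  ring

theorem cesaro_sum_asymptotic :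
    ∃ C : ℝ, 0 < C ∧ ∀ Y : ℝ, 1 ≤ Y →
      |(∑ m ∈ Finset.Icc 1 ⌊Y⌋₊, (1 / (m : ℝ)) * (Y - m) ^ 2) -
        (Y ^ 2 * Real.log Y + C₂ * Y ^ 2 + Y)| ≤ C := by
  refine ⟨3, by norm_num, fun Y hY ↦ ?_⟩
  set N := ⌊Y⌋₊
  have hN : 1 ≤ N := (Nat.one_le_floor_iff Y).mpr hY
  have hN₁ : (1 : ℝ) ≤ N := by exact_mod_cast hN
  have hNY : (N : ℝ) ≤ Y := Nat.floor_le (by linarith)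
  have hYN : Y ≤ N + 1 := (Nat.lt_floor_add_one Y).le
  have hfrac : (Y - N) ^ 2 / (2 * N) ≤ 1 / 2 := by
    rw [div_le_iff₀ (by positivity)]; nlinarith
  have hsq : Y ^ 2 / (12 * N ^ 2) ≤ 1 / 3 := by
    rw [div_le_iff₀ (by positivity)]; nlinarith
  have htail : |2 * Y ^ 2 * ∫ u in Set.Ioi (N : ℝ), B₂ u / u ^ 3| ≤ 1 / 3 := by
    rw [abs_mul, abs_of_nonneg (by positivity : (0 : ℝ) ≤ 2 * Y ^ 2)]
    calc 2 * Y ^ 2 * |∫ u in Set.Ioi (N : ℝ), B₂ u / u ^ 3|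
        ≤ 2 * Y ^ 2 * (1 / (24 * N ^ 2)) := by
          gcongr; exact abs_integral_Ioi_B₂_div_pow_three_le (by positivity)
      _ = Y ^ 2 / (12 * N ^ 2) := by field_simp; ring
      _ ≤ 1 / 3 := hsq
  have hlog := abs_sq_mul_log_sub_log_sub_le hN₁ hNY hYN
  rw [sum_Icc_one_div_mul_sub_sq_sub_eq Y hN]
  rw [abs_le] at hlog htail ⊢
  have : 0 ≤ (Y - N) ^ 2 / (2 * N) := by positivity
  have : 0 ≤ Y ^ 2 / (12 * N ^ 2) := by positivity
  constructor <;> linarith
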